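/- Let f' : GL(d,ℝ) → ℝ be an invariant function with variation function F', let ε₁,…,ε_k ∈ {±1}, and define f : GL(d,ℝ)^k → ℝ by f(g₁,…,g_k) = f'(g₁^{ε₁}·g₂^{ε₂}⋯g_k^{ε_k}). Then for every index i with ε_i = −1, the i-th variation function of f is given by F_i(g₁,…,g_k) = −F'(g_{i+1}^{ε_{i+1}}⋯g_k^{ε_k}·g₁^{ε₁}⋯g_{i−1}^{ε_{i−1}}·g_i^{−1}). -/

import Mathlib

open Matrix

attribute [local instance] Matrix.normedAddCommGroup Matrix.normedSpace

noncomputable section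

/-- An invariant multi-function on `GL(d,ℝ)^k`: a real-valued function on `k`-tuples of
`d × d` real matrices that is differentiable on the open set of tuples of invertible
matrices and invariant under the diagonal action of `GL(d,ℝ)` by conjugation. -/
def IsInvariantFun (d k : ℕ) (f : (Fin k → Matrix (Fin d) (Fin d) ℝ) → ℝ) : Prop :=
  DifferentiableOn ℝ f {g : Fin k → Matrix (Fin d) (Fin d) ℝ | ∀ i, IsUnit (g i)} ∧
  ∀ h : Matrix (Fin d) (Fin d) ℝ, IsUnit h →
    ∀ g : Fin k → Matrix (Fin d) (Fin d) ℝ, (∀ i, IsUnit (g i)) →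
      f (fun i => h * g i * h⁻¹) = f g

/-- `F` is the tuple of variation functions of `f` with respect to the trace form
`𝔅(X,Y) = tr (X*Y)`: the matrix `F j g` satisfies that `tr (F j g * X)` is the derivative
at `t = 0` of `t ↦ f (g₁, …, exp(tX)·g_j, …, g_k)`, for every `X`. -/
def IsVariationFun (d k : ℕ) (f : (Fin k → Matrix (Fin d) (Fin d) ℝ) → ℝ)
    (F : Fin k → (Fin k → Matrix (Fin d) (Fin d) ℝ) → Matrix (Fin d) (Fin d) ℝ) : Prop :=
  ∀ (j : Fin k) (g : Fin k → Matrix (Fin d) (Fin d) ℝ), (∀ i, IsUnit (g i)) →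
    ∀ X : Matrix (Fin d) (Fin d) ℝ,
      HasDerivAt
        (fun t : ℝ => f (Function.update g j (NormedSpace.exp (t • X) * g j)))
        (Matrix.trace (F j g * X)) 0

/-- An invariant function on `GL(d,ℝ)`: a real-valued function on `d × d` real matrices
that is differentiable on the open set of invertible matrices and invariant under
conjugation. -/
def IsInvariantFunOne (d : ℕ) (f : Matrix (Fin d) (Fin d) ℝ → ℝ) : Prop :=
  DifferentiableOn ℝ f {g : Matrix (Fin d) (Fin d) ℝ | IsUnit g} ∧
  ∀ h : Matrix (Fin d) (Fin d) ℝ, IsUnit h →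
    ∀ g : Matrix (Fin d) (Fin d) ℝ, IsUnit g → f (h * g * h⁻¹) = f g

/-- `F` is the variation function of `f : GL(d,ℝ) → ℝ` with respect to the trace form:
`tr (F g * X)` is the derivative at `t = 0` of `t ↦ f (exp(tX)·g)`, for every `X`. -/
def IsVariationFunOne (d : ℕ) (f : Matrix (Fin d) (Fin d) ℝ → ℝ)
    (F : Matrix (Fin d) (Fin d) ℝ → Matrix (Fin d) (Fin d) ℝ) : Prop :=
  ∀ g : Matrix (Fin d) (Fin d) ℝ, IsUnit g → ∀ X : Matrix (Fin d) (Fin d) ℝ,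
    HasDerivAt (fun t : ℝ => f (NormedSpace.exp (t • X) * g))
      (Matrix.trace (F g * X)) 0

/-- The word map `(g₁, …, g_k) ↦ g₁^{ε₁} · g₂^{ε₂} ⋯ g_k^{ε_k}` on tuples of matrices. -/
def wordProd {d k : ℕ} (ε : Fin k → ℤ) (g : Fin k → Matrix (Fin d) (Fin d) ℝ) :
    Matrix (Fin d) (Fin d) ℝ :=
  (List.ofFn fun i => g i ^ ε i).prod

/-!
Perturbing `g_i` to `exp(tX) g_i` turns the letter `g_i⁻¹` of the word into `g_i⁻¹ exp(-tX)`, so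
the word becomes `A g_i⁻¹ exp(-tX) B`, where `A` and `B` are the products of the letters before
and after position `i`. Conjugation invariance of `f'` rotates this to `exp(-tX) (B A g_i⁻¹)`,
whose derivative at `t = 0` is `tr (F' (B A g_i⁻¹) (-X))`; as the trace form is nondegenerate,
this determines `F_i`.
-/

namespace List

theorem ofFn_update {α : Type*} {n : ℕ} (f : Fin n → α) (i : Fin n) (a : α) :
    ofFn (Function.update f i a) = (ofFn f).set i a := by
  refine ext_getElem (by simp) fun m hm _ => ?_
  simp only [List.getElem_ofFn, Function.update_apply, eq_comm, Fin.ext_iff, getElem_set]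

end List

theorem wordProd_update {d k : ℕ} (ε : Fin k → ℤ) (g : Fin k → Matrix (Fin d) (Fin d) ℝ)
    (i : Fin k) (u : Matrix (Fin d) (Fin d) ℝ) :
    wordProd ε (Function.update g i u) =
      ((List.ofFn fun l => g l ^ ε l).take i).prod * u ^ ε i *
        ((List.ofFn fun l => g l ^ ε l).drop (i + 1)).prod := by
  have hletters : (fun l => Function.update g i u l ^ ε l) =
      Function.update (fun l => g l ^ ε l) i (u ^ ε i) :=
    funext (Function.apply_update (fun l m => m ^ ε l) g i u)
  rw [wordProd, hletters, List.ofFn_update, List.prod_set, if_pos (by simp)]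

theorem isUnit_of_mem_ofFn_zpow {d k : ℕ} {ε : Fin k → ℤ}
    {g : Fin k → Matrix (Fin d) (Fin d) ℝ} (hg : ∀ l, IsUnit (g l))
    {m : Matrix (Fin d) (Fin d) ℝ} (hm : m ∈ List.ofFn fun l => g l ^ ε l) : IsUnit m := by
  obtain ⟨l, rfl⟩ := List.mem_ofFn.mp hm
  have hdet : IsUnit (g l).det := (Matrix.isUnit_iff_isUnit_det _).mp (hg l)
  exact (Matrix.isUnit_iff_isUnit_det _).mpr (hdet.det_zpow _)

theorem IsInvariantFunOne.apply_mul_comm {d : ℕ} {f : Matrix (Fin d) (Fin d) ℝ → ℝ}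
    (hf : IsInvariantFunOne d f) {a b : Matrix (Fin d) (Fin d) ℝ} (ha : IsUnit a) (hb : IsUnit b) :
    f (a * b) = f (b * a) := by
  have ha' : IsUnit a.det := (Matrix.isUnit_iff_isUnit_det a).mp ha
  rw [← hf.2 a⁻¹ (Matrix.isUnit_nonsing_inv_iff.mpr ha) _ (ha.mul hb),
    Matrix.nonsing_inv_nonsing_inv _ ha', Matrix.nonsing_inv_mul_cancel_left _ _ ha']

theorem IsVariationFunOne.hasDerivAt_mul_exp_mul {d : ℕ} {f : Matrix (Fin d) (Fin d) ℝ → ℝ}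
    {F : Matrix (Fin d) (Fin d) ℝ → Matrix (Fin d) (Fin d) ℝ} (hF : IsVariationFunOne d f F)
    (hf : IsInvariantFunOne d f) {a b : Matrix (Fin d) (Fin d) ℝ} (ha : IsUnit a) (hb : IsUnit b)
    (X : Matrix (Fin d) (Fin d) ℝ) :
    HasDerivAt (fun t : ℝ => f (a * NormedSpace.exp (t • X) * b))
      (Matrix.trace (F (b * a) * X)) 0 := by
  have hrot : ∀ t : ℝ,
      f (a * NormedSpace.exp (t • X) * b) = f (NormedSpace.exp (t • X) * (b * a)) := fun t => by
    rw [Matrix.mul_assoc, hf.apply_mul_comm ha ((Matrix.isUnit_exp _).mul hb), Matrix.mul_assoc]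
  simpa only [hrot] using hF (b * a) (hb.mul ha) X

theorem variation_of_word_function_negative_exponent_general (d k : ℕ)
    (f' : Matrix (Fin d) (Fin d) ℝ → ℝ)
    (F' : Matrix (Fin d) (Fin d) ℝ → Matrix (Fin d) (Fin d) ℝ)
    (hf' : IsInvariantFunOne d f') (hF' : IsVariationFunOne d f' F')
    (ε : Fin k → ℤ)
    (F : Fin k → (Fin k → Matrix (Fin d) (Fin d) ℝ) → Matrix (Fin d) (Fin d) ℝ)
    (hF : IsVariationFun d k (fun g => f' (wordProd ε g)) F)
    (i : Fin k) (hi : ε i = -1)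
    (g : Fin k → Matrix (Fin d) (Fin d) ℝ) (hg : ∀ l, IsUnit (g l)) :
    F i g = -F' (((List.ofFn fun l => g l ^ ε l).drop ((i : ℕ) + 1)).prod *
      ((List.ofFn fun l => g l ^ ε l).take (i : ℕ)).prod * (g i)⁻¹) := by
  set L := List.ofFn fun l => g l ^ ε l
  have hA : IsUnit (L.take i).prod :=
    List.prod_isUnit fun m hm => isUnit_of_mem_ofFn_zpow hg (List.mem_of_mem_take hm)
  have hB : IsUnit (L.drop (i + 1)).prod :=
    List.prod_isUnit fun m hm => isUnit_of_mem_ofFn_zpow hg (List.mem_of_mem_drop hm)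
  have hAg : IsUnit ((L.take i).prod * (g i)⁻¹) :=
    hA.mul (Matrix.isUnit_nonsing_inv_iff.mpr (hg i))
  refine Matrix.ext_iff_trace_mul_right.mpr fun X => ?_
  have hword : ∀ t : ℝ, wordProd ε (Function.update g i (NormedSpace.exp (t • X) * g i)) =
      (L.take i).prod * (g i)⁻¹ * NormedSpace.exp (t • -X) * (L.drop (i + 1)).prod := fun t => by
    rw [wordProd_update, hi, Matrix.zpow_neg_one, Matrix.mul_inv_rev, smul_neg, Matrix.exp_neg,
      Matrix.mul_assoc _ (g i)⁻¹]
  have hderiv := hF i g hg X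
  simp only [hword] at hderiv
  rw [hderiv.unique (hF'.hasDerivAt_mul_exp_mul hf' hAg hB (-X)), Matrix.mul_neg, Matrix.neg_mul,
    Matrix.mul_assoc]

/-- if `f'` is an invariant function on `GL(d,ℝ)` with variation function `F'`,
`ε_i ∈ {±1}`, and `f (g₁,…,g_k) = f' (g₁^{ε₁} ⋯ g_k^{ε_k})`, then for every index `i` with
`ε_i = -1` the `i`-th variation function of `f` is
`F_i (g₁,…,g_k) = -F' (g_{i+1}^{ε_{i+1}} ⋯ g_k^{ε_k} · g₁^{ε₁} ⋯ g_{i-1}^{ε_{i-1}} · g_i⁻¹)`. -/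
theorem variation_of_word_function_negative_exponent (d k : ℕ)
    (f' : Matrix (Fin d) (Fin d) ℝ → ℝ)
    (F' : Matrix (Fin d) (Fin d) ℝ → Matrix (Fin d) (Fin d) ℝ)
    (hf' : IsInvariantFunOne d f') (hF' : IsVariationFunOne d f' F')
    (ε : Fin k → ℤ) (hε : ∀ i, ε i = 1 ∨ ε i = -1)
    (F : Fin k → (Fin k → Matrix (Fin d) (Fin d) ℝ) → Matrix (Fin d) (Fin d) ℝ)
    (hF : IsVariationFun d k (fun g => f' (wordProd ε g)) F)
    (i : Fin k) (hi : ε i = -1)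
    (g : Fin k → Matrix (Fin d) (Fin d) ℝ) (hg : ∀ l, IsUnit (g l)) :
    F i g = -F' (((List.ofFn fun l => g l ^ ε l).drop ((i : ℕ) + 1)).prod *
      ((List.ofFn fun l => g l ^ ε l).take (i : ℕ)).prod * (g i)⁻¹) :=
  variation_of_word_function_negative_exponent_general d k f' F' hf' hF' ε F hF i hi g hg
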